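/- Let 0 < p ≤ 1 and let f be a continuous real function on [0, ∞) such that f(A # B) ≤ f(P_μ(p, A, B)) for all positive definite n×n complex matrices A, B and all n, where A # B is the matrix geometric mean and P_μ is the Kubo–Ando power mean. Then f is operator monotone on (0, ∞). -/

import Mathlib

open scoped ComplexOrder

/-- The real power of a matrix, via the continuous functional calculus. -/
noncomputable def mpow {n : ℕ} (A : Matrix (Fin n) (Fin n) ℂ) (p : ℝ) :
    Matrix (Fin n) (Fin n) ℂ :=
  cfc (fun x : ℝ => x ^ p) A

/-- The matrix geometric mean `A # B = A^(1/2) (A^(-1/2) B A^(-1/2))^(1/2) A^(1/2)`. -/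
noncomputable def geomMean {n : ℕ} (A B : Matrix (Fin n) (Fin n) ℂ) :
    Matrix (Fin n) (Fin n) ℂ :=
  mpow A (1 / 2) * mpow (mpow A (-(1 / 2)) * B * mpow A (-(1 / 2))) (1 / 2) * mpow A (1 / 2)

/-- The Kubo–Ando matrix power mean
`P_μ(p, A, B) = A^(1/2) ((I + (A^(-1/2) B A^(-1/2))^p)/2)^(1/p) A^(1/2)`. -/
noncomputable def Pmu {n : ℕ} (p : ℝ) (A B : Matrix (Fin n) (Fin n) ℂ) :
    Matrix (Fin n) (Fin n) ℂ :=
  mpow A (1 / 2) *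
    mpow ((2 : ℂ)⁻¹ • (1 + mpow (mpow A (-(1 / 2)) * B * mpow A (-(1 / 2))) p)) (1 / p) *
    mpow A (1 / 2)


/-!
Given `0 < X ≤ Y`, we build `A, B > 0` with `A # B = X` and `P_μ(p, A, B) = Y`; the hypothesis
then reads `f X ≤ f Y`. Both means are Kubo–Ando means `A^(1/2) φ(A^(-1/2) B A^(-1/2)) A^(1/2)`,
for `φ x = x^(1/2)` and `φ_p x = ((1 + x^p)/2)^(1/p)`, and whenever `A = R Rᴴ` the matrix
`A^(-1/2) R` is unitary, so the mean of `A` and `R C Rᴴ` is `R φ(C) Rᴴ`.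

Put `Z = X^(-1/2) Y X^(-1/2) ≥ 1`. The scalar map `w ↦ w φ_p(w⁻²) = ((w^p + w^(-p))/2)^(1/p)`
equals `1` at `w = 1` and is unbounded, so it takes every value `z ≥ 1`; choose such `w(z) > 0` on
the spectrum of `Z` and let `A = X^(1/2) w(Z) X^(1/2)`, `B = X^(1/2) w(Z)⁻¹ X^(1/2)`. Then
`A # B = X^(1/2) X^(1/2) = X` and `P_μ(p, A, B) = X^(1/2) Z X^(1/2) = Y`.
-/

open Matrix
open scoped MatrixOrder

section Spectrum

variable {ι 𝕜 : Type*} [Fintype ι] [DecidableEq ι] [RCLike 𝕜]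

-- Registered with `fun_prop`, it discharges the continuity side goals of the `cfc` lemmas.
@[fun_prop]
lemma Matrix.continuousOn_real_spectrum (f : ℝ → ℝ) (A : Matrix ι ι 𝕜) :
    ContinuousOn f (spectrum ℝ A) :=
  A.finite_real_spectrum.continuousOn f

lemma cfc_conjugate_unitary (u : unitary (Matrix ι ι 𝕜)) (f : ℝ → ℝ) {C : Matrix ι ι 𝕜}
    (hC : IsSelfAdjoint C) :
    cfc f ((u : Matrix ι ι 𝕜) * C * star (u : Matrix ι ι 𝕜)) =
      u * cfc f C * star (u : Matrix ι ι 𝕜) :=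
  (StarAlgHomClass.map_cfc (Unitary.conjStarAlgAut 𝕜 _ u) f C
    (hφ := by
      change Continuous fun x : Matrix ι ι 𝕜 => (u : Matrix ι ι 𝕜) * x * star (u : Matrix ι ι 𝕜)
      fun_prop)
    (hφa := hC.conjugate _)).symm

lemma posDef_mul_cfc_mul_conjTranspose {T Z : Matrix ι ι 𝕜} (hT : IsUnit T)
    (hZ : IsSelfAdjoint Z) {g : ℝ → ℝ} (hg : ∀ z ∈ spectrum ℝ Z, 0 < g z) :
    (T * cfc g Z * Tᴴ).PosDef :=
  ((cfc_isStrictlyPositive_iff g Z).2 hg).posDef.mul_mul_conjTranspose_same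
    (vecMul_injective_iff_isUnit.2 hT)

lemma one_le_of_mem_spectrum {Z : Matrix ι ι 𝕜} (hZ : (Z - 1).PosSemidef) :
    ∀ z ∈ spectrum ℝ Z, 1 ≤ z := by
  have hZsa : IsSelfAdjoint Z := by simpa using hZ.isHermitian.isSelfAdjoint.add (.one _)
  refine (algebraMap_le_iff_le_spectrum (R := ℝ) hZsa).1 ?_
  rwa [map_one, Matrix.le_iff]

end Spectrum

noncomputable def powerMeanFun (p x : ℝ) : ℝ := ((1 + x ^ p) / 2) ^ (1 / p)

lemma exists_pos_mul_powerMeanFun_eq {p z : ℝ} (hp : 0 < p) (hz : 1 ≤ z) :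
    ∃ w, 0 < w ∧ w * powerMeanFun p (w ^ (-2 : ℝ)) = z := by
  set F : ℝ → ℝ := fun w => w * powerMeanFun p (w ^ (-2 : ℝ))
  have hF_one : F 1 = 1 := by simp [F, powerMeanFun]
  have hF_ge : ∀ w, 0 < w → w * (1 / 2) ^ (1 / p) ≤ F w := fun w hw => by
    refine mul_le_mul_of_nonneg_left (Real.rpow_le_rpow (by norm_num) ?_ (by positivity)) hw.le
    have := Real.rpow_nonneg (Real.rpow_nonneg hw.le (-2 : ℝ)) p
    linarith
  have hF_cont : ContinuousOn F (Set.Ici 1) := by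
    refine continuousOn_id.mul (ContinuousOn.rpow_const ?_ fun _ _ => Or.inr (by positivity))
    refine (continuousOn_const.add ?_).div_const _
    exact (continuousOn_id.rpow_const fun w hw => Or.inl (by simp at hw; positivity)).rpow_const
      fun _ _ => Or.inr hp.le
  set b := z * 2 ^ (1 / p)
  have hb : 1 ≤ b := by
    have : (1 : ℝ) ≤ 2 ^ (1 / p) := Real.one_le_rpow (by norm_num) (by positivity)
    nlinarith
  have hFb : z ≤ F b :=
    calc z = b * (1 / 2) ^ (1 / p) := by
          rw [mul_assoc, ← Real.mul_rpow (by norm_num) (by norm_num)]; norm_num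
      _ ≤ F b := hF_ge b (by linarith)
  obtain ⟨w, hw, hFw⟩ := intermediate_value_Icc hb (hF_cont.mono Set.Icc_subset_Ici_self)
    ⟨hF_one.symm ▸ hz, hFb⟩
  exact ⟨w, by linarith [hw.1], hFw⟩

lemma mul_rpow_neg_two_rpow_half {w : ℝ} (hw : 0 < w) : w * (w ^ (-2 : ℝ)) ^ (1 / 2 : ℝ) = 1 := by
  rw [← Real.rpow_mul hw.le]; norm_num [Real.rpow_neg_one, hw.ne']

section MatrixMeans

variable {n : ℕ}

lemma isSelfAdjoint_mpow (A : Matrix (Fin n) (Fin n) ℂ) (r : ℝ) : IsSelfAdjoint (mpow A r) :=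
  cfc_predicate _ A

lemma conjTranspose_mpow (A : Matrix (Fin n) (Fin n) ℂ) (r : ℝ) : (mpow A r)ᴴ = mpow A r :=
  (isSelfAdjoint_mpow A r).star_eq

lemma isSelfAdjoint_mpow_mul_mul_mpow (A : Matrix (Fin n) (Fin n) ℂ) {B : Matrix (Fin n) (Fin n) ℂ}
    (hB : IsSelfAdjoint B) (r : ℝ) : IsSelfAdjoint (mpow A r * B * mpow A r) := by
  simpa only [(isSelfAdjoint_mpow A r).star_eq] using hB.conjugate (mpow A r)

lemma mpow_mul_mpow {A : Matrix (Fin n) (Fin n) ℂ} (hA : A.PosDef) (r s : ℝ) :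
    mpow A r * mpow A s = mpow A (r + s) := by
  rw [mpow, mpow, mpow, ← cfc_mul ..]
  exact cfc_congr fun x hx => (Real.rpow_add (hA.isStrictlyPositive.spectrum_pos hx) r s).symm

lemma mpow_zero {A : Matrix (Fin n) (Fin n) ℂ} (hA : IsSelfAdjoint A) : mpow A 0 = 1 := by
  simp [mpow, cfc_const_one ℝ A]

lemma mpow_one {A : Matrix (Fin n) (Fin n) ℂ} (hA : IsSelfAdjoint A) : mpow A 1 = A := by
  simp [mpow, cfc_id' ℝ A]

lemma mpow_half_mul_mpow_half {A : Matrix (Fin n) (Fin n) ℂ} (hA : A.PosDef) :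
    mpow A (1 / 2) * mpow A (1 / 2) = A := by
  rw [mpow_mul_mpow hA]; norm_num [mpow_one hA.isHermitian.isSelfAdjoint]

lemma mpow_half_mul_mpow_neg_half {A : Matrix (Fin n) (Fin n) ℂ} (hA : A.PosDef) :
    mpow A (1 / 2) * mpow A (-(1 / 2)) = 1 := by
  rw [mpow_mul_mpow hA]; norm_num [mpow_zero hA.isHermitian.isSelfAdjoint]

lemma mpow_neg_half_mul_mpow_half {A : Matrix (Fin n) (Fin n) ℂ} (hA : A.PosDef) :
    mpow A (-(1 / 2)) * mpow A (1 / 2) = 1 := by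
  rw [mpow_mul_mpow hA]; norm_num [mpow_zero hA.isHermitian.isSelfAdjoint]

lemma mpow_neg_half_mul_mul_mpow_neg_half {A : Matrix (Fin n) (Fin n) ℂ} (hA : A.PosDef) :
    mpow A (-(1 / 2)) * A * mpow A (-(1 / 2)) = 1 :=
  calc mpow A (-(1 / 2)) * A * mpow A (-(1 / 2))
      = (mpow A (-(1 / 2)) * mpow A (1 / 2)) * (mpow A (1 / 2) * mpow A (-(1 / 2))) := by
        nth_rw 2 [← mpow_half_mul_mpow_half hA]; simp only [mul_assoc]
    _ = 1 := by rw [mpow_neg_half_mul_mpow_half hA, mpow_half_mul_mpow_neg_half hA, one_mul]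

lemma mpow_half_mul_mpow_neg_half_conj {A : Matrix (Fin n) (Fin n) ℂ} (hA : A.PosDef)
    (B : Matrix (Fin n) (Fin n) ℂ) :
    mpow A (1 / 2) * (mpow A (-(1 / 2)) * B * mpow A (-(1 / 2))) * mpow A (1 / 2) = B := by
  simp only [← mul_assoc]
  rw [mpow_half_mul_mpow_neg_half hA, one_mul, mul_assoc _ (mpow A _),
    mpow_neg_half_mul_mpow_half hA, mul_one]

lemma mpow_cfc (g : ℝ → ℝ) {A : Matrix (Fin n) (Fin n) ℂ} (hA : IsSelfAdjoint A) (r : ℝ) :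
    mpow (cfc g A) r = cfc (fun x => g x ^ r) A :=
  (cfc_comp' (· ^ r) g A ((A.finite_real_spectrum.image g).continuousOn _)).symm

noncomputable def kuboAndoMean (φ : ℝ → ℝ) (A B : Matrix (Fin n) (Fin n) ℂ) :
    Matrix (Fin n) (Fin n) ℂ :=
  mpow A (1 / 2) * cfc φ (mpow A (-(1 / 2)) * B * mpow A (-(1 / 2))) * mpow A (1 / 2)

lemma geomMean_eq_kuboAndoMean (A B : Matrix (Fin n) (Fin n) ℂ) :
    geomMean A B = kuboAndoMean (· ^ (1 / 2 : ℝ)) A B :=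
  rfl

lemma Pmu_eq_kuboAndoMean (p : ℝ) (A : Matrix (Fin n) (Fin n) ℂ)
    {B : Matrix (Fin n) (Fin n) ℂ} (hB : IsSelfAdjoint B) :
    Pmu p A B = kuboAndoMean (powerMeanFun p) A B := by
  set K := mpow A (-(1 / 2)) * B * mpow A (-(1 / 2))
  have hK : IsSelfAdjoint K := isSelfAdjoint_mpow_mul_mul_mpow A hB _
  have hmean : (2 : ℂ)⁻¹ • (1 + mpow K p) = cfc (fun x : ℝ => (1 + x ^ p) / 2) K :=
    calc (2 : ℂ)⁻¹ • (1 + mpow K p) = (2 : ℝ)⁻¹ • (1 + mpow K p) := by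
          rw [← Complex.coe_smul]; norm_num
      _ = cfc (fun x : ℝ => (2 : ℝ)⁻¹ * (1 + x ^ p)) K := by
          rw [cfc_const_mul, cfc_const_add .., map_one, mpow]
      _ = cfc (fun x : ℝ => (1 + x ^ p) / 2) K := cfc_congr fun x _ => by ring
  rw [Pmu, kuboAndoMean, hmean, mpow_cfc _ hK]
  rfl

lemma kuboAndoMean_mul_mul_conjTranspose (φ : ℝ → ℝ) {A R C : Matrix (Fin n) (Fin n) ℂ}
    (hA : A.PosDef) (hRA : R * Rᴴ = A) (hC : IsSelfAdjoint C) :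
    kuboAndoMean φ A (R * C * Rᴴ) = R * cfc φ C * Rᴴ := by
  set S' := mpow A (-(1 / 2))
  have hS' : S'ᴴ = S' := conjTranspose_mpow A _
  have hu : S' * R ∈ unitary (Matrix (Fin n) (Fin n) ℂ) := by
    have h : S' * R * star (S' * R) = 1 := by
      rw [star_eq_conjTranspose, conjTranspose_mul, hS', ← mul_assoc, mul_assoc S', hRA,
        mpow_neg_half_mul_mul_mpow_neg_half hA]
    exact Unitary.mem_iff.2 ⟨mul_eq_one_comm.1 h, h⟩
  have hconj : S' * (R * C * Rᴴ) * S' = (S' * R) * C * star (S' * R) := by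
    rw [star_eq_conjTranspose, conjTranspose_mul, hS']; simp only [mul_assoc]
  rw [kuboAndoMean, hconj, cfc_conjugate_unitary ⟨_, hu⟩ φ hC, star_eq_conjTranspose,
    conjTranspose_mul, hS']
  simp only [← mul_assoc]
  rw [mpow_half_mul_mpow_neg_half hA, one_mul, mul_assoc _ S', mpow_neg_half_mul_mpow_half hA,
    mul_one]

lemma kuboAndoMean_mul_cfc_mul_conjTranspose (φ u c : ℝ → ℝ) {T Z : Matrix (Fin n) (Fin n) ℂ}
    (hZ : IsSelfAdjoint Z) (hu : ∀ z ∈ spectrum ℝ Z, 0 ≤ u z)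
    (hA : (T * cfc u Z * Tᴴ).PosDef) :
    kuboAndoMean φ (T * cfc u Z * Tᴴ) (T * cfc (fun z => u z * c z) Z * Tᴴ) =
      T * cfc (fun z => u z * φ (c z)) Z * Tᴴ := by
  set s := cfc (fun z => √(u z)) Z
  have hR : ∀ g : ℝ → ℝ, (T * s) * cfc g Z * (T * s)ᴴ = T * cfc (fun z => u z * g z) Z * Tᴴ := by
    intro g
    have hs : sᴴ = s := (cfc_predicate _ Z : IsSelfAdjoint s).star_eq
    calc (T * s) * cfc g Z * (T * s)ᴴ = T * (s * cfc g Z * s) * Tᴴ := by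
          rw [conjTranspose_mul, hs]; simp only [mul_assoc]
      _ = T * cfc (fun z => u z * g z) Z * Tᴴ := by
          rw [← cfc_mul .., ← cfc_mul ..]
          congr 2
          refine cfc_congr fun z hz => ?_
          rw [mul_comm, ← mul_assoc, Real.mul_self_sqrt (hu z hz)]
  have hRR : (T * s) * (T * s)ᴴ = T * cfc u Z * Tᴴ := by
    simpa [cfc_const_one ℝ Z] using hR fun _ => 1
  rw [← hR c, ← hRR, kuboAndoMean_mul_mul_conjTranspose φ (hRR ▸ hA) rfl (cfc_predicate _ Z),
    ← cfc_comp' φ c Z ((Z.finite_real_spectrum.image c).continuousOn _), hR]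

lemma geomMean_mul_cfc_mul_conjTranspose {T Z : Matrix (Fin n) (Fin n) ℂ} (hT : IsUnit T)
    (hZ : IsSelfAdjoint Z) {w : ℝ → ℝ} (hw : ∀ z ∈ spectrum ℝ Z, 0 < w z) :
    geomMean (T * cfc w Z * Tᴴ) (T * cfc (fun z => w z * w z ^ (-2 : ℝ)) Z * Tᴴ) = T * Tᴴ := by
  rw [geomMean_eq_kuboAndoMean, kuboAndoMean_mul_cfc_mul_conjTranspose _ _ _ hZ
    (fun z hz => (hw z hz).le) (posDef_mul_cfc_mul_conjTranspose hT hZ hw)]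
  calc T * cfc (fun z => w z * (w z ^ (-2 : ℝ)) ^ (1 / 2 : ℝ)) Z * Tᴴ
      = T * cfc (fun _ => 1) Z * Tᴴ :=
        congrArg (T * · * Tᴴ) (cfc_congr fun z hz => mul_rpow_neg_two_rpow_half (hw z hz))
    _ = T * Tᴴ := by rw [cfc_const_one ℝ Z, mul_one]

lemma Pmu_mul_cfc_mul_conjTranspose {p : ℝ} {T Z : Matrix (Fin n) (Fin n) ℂ} (hT : IsUnit T)
    (hZ : IsSelfAdjoint Z) {w : ℝ → ℝ} (hw : ∀ z ∈ spectrum ℝ Z, 0 < w z)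
    (hw_eq : ∀ z ∈ spectrum ℝ Z, w z * powerMeanFun p (w z ^ (-2 : ℝ)) = z) :
    Pmu p (T * cfc w Z * Tᴴ) (T * cfc (fun z => w z * w z ^ (-2 : ℝ)) Z * Tᴴ) = T * Z * Tᴴ := by
  have hB : IsSelfAdjoint (T * cfc (fun z => w z * w z ^ (-2 : ℝ)) Z * Tᴴ) :=
    isHermitian_mul_mul_conjTranspose T (cfc_predicate _ Z)
  rw [Pmu_eq_kuboAndoMean _ _ hB,
    kuboAndoMean_mul_cfc_mul_conjTranspose _ _ _ hZ (fun z hz => (hw z hz).le)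
      (posDef_mul_cfc_mul_conjTranspose hT hZ hw), cfc_congr hw_eq, cfc_id' ℝ Z]

end MatrixMeans

theorem operator_monotone_of_geom_le_power_mean_general (f : ℝ → ℝ) (p : ℝ)
    (hp0 : 0 < p)
    (h : ∀ (n : ℕ) (A B : Matrix (Fin n) (Fin n) ℂ), A.PosDef → B.PosDef →
      (cfc f (Pmu p A B) - cfc f (geomMean A B)).PosSemidef) :
    ∀ (n : ℕ) (X Y : Matrix (Fin n) (Fin n) ℂ), X.PosDef → Y.PosDef →
      (Y - X).PosSemidef → (cfc f Y - cfc f X).PosSemidef := by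
  intro n X Y hX hY hXY
  set T := mpow X (1 / 2)
  set S := mpow X (-(1 / 2))
  set Z := S * Y * S
  have hZ : IsSelfAdjoint Z := isSelfAdjoint_mpow_mul_mul_mpow X hY.isHermitian.isSelfAdjoint _
  have hZ_one : ∀ z ∈ spectrum ℝ Z, 1 ≤ z := by
    have hZ_sub : Z - 1 = S * (Y - X) * Sᴴ := by
      rw [conjTranspose_mpow X _, mul_sub, sub_mul,
        mpow_neg_half_mul_mul_mpow_neg_half hX]
    exact one_le_of_mem_spectrum (hZ_sub ▸ hXY.mul_mul_conjTranspose_same S)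
  choose! w hw_pos hw_eq using fun z hz => exists_pos_mul_powerMeanFun_eq hp0 (hZ_one z hz)
  have hT : IsUnit T := .of_mul_eq_one S (mpow_half_mul_mpow_neg_half hX)
  have hTT : T * Tᴴ = X := by
    rw [conjTranspose_mpow X _, mpow_half_mul_mpow_half hX]
  have hTZT : T * Z * Tᴴ = Y := by
    rw [conjTranspose_mpow X _, mpow_half_mul_mpow_neg_half_conj hX]
  have hmeans := h n _ _ (posDef_mul_cfc_mul_conjTranspose hT hZ hw_pos)
    (posDef_mul_cfc_mul_conjTranspose hT hZ (g := fun z => w z * w z ^ (-2 : ℝ)) fun z hz =>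
      mul_pos (hw_pos z hz) (Real.rpow_pos_of_pos (hw_pos z hz) _))
  rwa [geomMean_mul_cfc_mul_conjTranspose hT hZ hw_pos, hTT,
    Pmu_mul_cfc_mul_conjTranspose hT hZ hw_pos hw_eq, hTZT] at hmeans

theorem operator_monotone_of_geom_le_power_mean (f : ℝ → ℝ) (p : ℝ)
    (hp0 : 0 < p) (hp1 : p ≤ 1) (hf : ContinuousOn f (Set.Ici 0))
    (h : ∀ (n : ℕ) (A B : Matrix (Fin n) (Fin n) ℂ), A.PosDef → B.PosDef →
      (cfc f (Pmu p A B) - cfc f (geomMean A B)).PosSemidef) :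
    ∀ (n : ℕ) (X Y : Matrix (Fin n) (Fin n) ℂ), X.PosDef → Y.PosDef →
      (Y - X).PosSemidef → (cfc f Y - cfc f X).PosSemidef :=
  operator_monotone_of_geom_le_power_mean_general f p hp0 h
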